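/- arXiv:1810.00241 — 4 statements merged into one kernel-verified Lean document; each statement's English description precedes it below -/
import Mathlib

section
/- Let A be a commutative unital ring and let n ≥ 1. If every unimodular (n+1)-tuple in A is reducible, then every unimodular (n+2)-tuple in A is reducible. -/
/-- For a commutative unital ring `A`, if every unimodular `(n+1)`-tuple is reducible,
then every unimodular `(n+2)`-tuple is reducible. A unimodular tuple `(a, b)` (with
`a : Fin m → A` and last entry `b`) is reducible if one can add multiples of `b` to the
entries of `a` so as to obtain a unimodular `m`-tuple. -/
theorem reducible_succ {A : Type*} [CommRing A] (n : ℕ) (hn : 1 ≤ n)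
    (h : ∀ (a : Fin n → A) (b : A),
      (∃ (c : Fin n → A) (d : A), ∑ i, a i * c i + b * d = 1) →
      ∃ α : Fin n → A, ∃ c : Fin n → A, ∑ i, (a i + α i * b) * c i = 1) :
    ∀ (a : Fin (n + 1) → A) (b : A),
      (∃ (c : Fin (n + 1) → A) (d : A), ∑ i, a i * c i + b * d = 1) →
      ∃ α : Fin (n + 1) → A, ∃ c : Fin (n + 1) → A, ∑ i, (a i + α i * b) * c i = 1 := by
  rintro a b ⟨c, d, hc⟩
  set a₀ : Fin n → A := fun i => a i.castSucc with ha₀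
  set c₀ : Fin n → A := fun i => c i.castSucc with hc₀
  set aL : A := a (Fin.last n) with haL
  set cL : A := c (Fin.last n) with hcL
  rw [Fin.sum_univ_castSucc] at hc
  obtain ⟨α, c', hc'⟩ := h a₀ (aL * cL + b * d) ⟨c₀, 1, by
    rw [mul_one]; linear_combination hc⟩
  refine ⟨Fin.snoc (fun i => α i * d) 0, Fin.snoc c' (∑ i, α i * cL * c' i), ?_⟩
  rw [Fin.sum_univ_castSucc]
  simp only [Fin.snoc_castSucc, Fin.snoc_last]
  calc (∑ i : Fin n, (a i.castSucc + α i * d * b) * c' i)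
        + (a (Fin.last n) + 0 * b) * (∑ i, α i * cL * c' i)
      = ∑ i : Fin n, (a₀ i + α i * (aL * cL + b * d)) * c' i := by
        rw [zero_mul, add_zero, ← haL, Finset.mul_sum, ← Finset.sum_add_distrib]
        exact Finset.sum_congr rfl fun i _ => by rw [ha₀]; ring
    _ = 1 := hc'
end

section
/- Fix n ≥ 1 and L ≥ 0. Let T and S be elements of the monoid algebra AddMonoidAlgebra ℂ ℝ (finitely supported functions ℝ → ℂ with convolution product) whose supports are contained in the grid {ℓ/n : ℓ ∈ ℤ, −L ≤ ℓ ≤ L}. Then for every ε > 0 there exist T', S' ∈ AddMonoidAlgebra ℂ ℝ, also supported in {ℓ/n : ℓ ∈ ℤ, −L ≤ ℓ ≤ L}, with |T'(x) − T(x)| < ε and |S'(x) − S(x)| < ε for every x ∈ ℝ, and elements U, V ∈ AddMonoidAlgebra ℂ ℝ supported in {ℓ/n : ℓ ∈ ℤ} such that T' * U + S' * V = 1 (where * is the convolution product and 1 is the delta at 0). -/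
/-!
Supports in `(1/n)ℤ` make `T` and `S` the images of Laurent polynomials `t, s ∈ ℂ[T;T⁻¹]` under
the ring map induced by `ℓ ↦ ℓ / n`, and the constant `c` is mapped to `c • δ₀`. A Laurent
polynomial `t ≠ 0` has finitely many zeros, all in `ℂˣ`, so `t` and `s + c` are coprime unless
`c` is one of the finitely many values `-s(z)` at these zeros. Adding small constants to `t`
(to make it nonzero) and to `s` thus yields a Bezout identity `u (t + d) + v (s + c) = 1`, which
is carried back to `AddMonoidAlgebra ℂ ℝ`.
-/

open Filter Topology Function

theorem Set.Finite.exists_norm_lt_notMem {K : Type*} [NontriviallyNormedField K] {F : Set K}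
    (hF : F.Finite) {ε : ℝ} (hε : 0 < ε) : ∃ c : K, ‖c‖ < ε ∧ c ∉ F := by
  have hsmall : ∀ᶠ c in 𝓝[≠] (0 : K), c ∈ Metric.ball 0 ε :=
    mem_nhdsWithin_of_mem_nhds (Metric.ball_mem_nhds 0 hε)
  obtain ⟨c, hc, hcF⟩ := (hsmall.and (nhdsNE_le_cofinite (0 : K) hF.compl_mem_cofinite)).exists
  exact ⟨c, mem_ball_zero_iff.mp hc, hcF⟩

namespace Polynomial

theorem finite_setOf_not_isCoprime_add_C_mul {K : Type*} [Field K] [IsAlgClosed K] {p r : K[X]} (q : K[X]) (hp : p ≠ 0)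
    (hr : ∀ z, p.IsRoot z → r.eval z ≠ 0) :
    {c : K | ¬IsCoprime p (q + C c * r)}.Finite := by
  classical
  refine (p.roots.toFinset.image fun z => -q.eval z / r.eval z).finite_toSet.subset ?_
  intro c (hc : ¬IsCoprime p (q + C c * r))
  rw [isCoprime_iff_aeval_ne_zero_of_isAlgClosed K K] at hc
  push Not at hc
  obtain ⟨z, hpz, hqz⟩ := hc
  rw [coe_aeval_eq_eval] at hpz hqz
  have hrz := hr z hpz
  refine Finset.mem_image.mpr ⟨z, by simpa [hp] using hpz, ?_⟩
  rw [eval_add, eval_mul, eval_C] at hqz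
  rw [div_eq_iff hrz]
  linear_combination -hqz

end Polynomial

namespace LaurentPolynomial

open Polynomial

theorem mapDomainRingHom_C {R N : Type*} [Semiring R] [AddMonoid N] (f : ℤ →+ N) (a : R) :
    AddMonoidAlgebra.mapDomainRingHom R f (C a) = AddMonoidAlgebra.single 0 a :=
  (AddMonoidAlgebra.mapDomain_single ..).trans (by rw [map_zero])

theorem finite_setOf_not_isCoprime_add_C {K : Type*} [Field K] [IsAlgClosed K] {t : K[T;T⁻¹]}
    (s : K[T;T⁻¹]) (ht : t ≠ 0) :
    {c : K | ¬IsCoprime t (s + C c)}.Finite := by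
  obtain ⟨m, p, hp⟩ := t.exists_T_pow
  obtain ⟨m', q, hq⟩ := s.exists_T_pow
  have hp0 : p ≠ 0 := by
    rintro rfl
    exact ht ((isUnit_T _).mul_left_eq_zero.mp (by rw [← hp, map_zero]))
  obtain ⟨p₀, hpp₀, hXp₀⟩ := p.exists_eq_pow_rootMultiplicity_mul_and_not_dvd hp0 0
  rw [map_zero, sub_zero] at hpp₀ hXp₀
  have hp₀ : p₀ ≠ 0 := by rintro rfl; exact hXp₀ (dvd_zero _)
  have hroots : ∀ z, p₀.IsRoot z → (X ^ m' : K[X]).eval z ≠ 0 := by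
    intro z hz
    rw [eval_pow, eval_X]
    refine pow_ne_zero _ fun hz0 => hXp₀ ?_
    subst hz0
    rwa [X_dvd_iff, coeff_zero_eq_eval_zero]
  have ht_eq : T (p.rootMultiplicity 0) * toLaurent p₀ = t * T m := by
    rw [← toLaurent_X_pow, ← map_mul, ← hpp₀, hp]
  have hs_eq (c : K) : toLaurent (q + Polynomial.C c * X ^ m') = (s + C c) * T m' := by
    rw [map_add, hq, toLaurent_C_mul_X_pow, add_mul]
  -- `X` and `T` are units of `K[T;T⁻¹]`, so coprimality of `p₀` and `q + c X ^ m'` in `K[X]`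
  -- transfers to `t` and `s + c`.
  refine (finite_setOf_not_isCoprime_add_C_mul q hp₀ hroots).subset fun c hc hcop => hc ?_
  have hmap := hcop.map (toLaurent (R := K))
  rwa [hs_eq, isCoprime_mul_unit_right_right (isUnit_T _),
    ← isCoprime_mul_unit_left_left (isUnit_T _), ht_eq,
    isCoprime_mul_unit_right_left (isUnit_T _)] at hmap

theorem exists_isCoprime_add_C_add_C {K : Type*} [NontriviallyNormedField K] [IsAlgClosed K]
    (t s : K[T;T⁻¹]) {ε : ℝ} (hε : 0 < ε) :
    ∃ d c : K, ‖d‖ < ε ∧ ‖c‖ < ε ∧ IsCoprime (t + C d) (s + C c) := by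
  have hzero : {d : K | t + C d = 0}.Finite :=
    Set.Subsingleton.finite fun d (hd : t + C d = 0) d' (hd' : t + C d' = 0) =>
      (C : K →+* K[T;T⁻¹]).injective (add_left_cancel (hd.trans hd'.symm))
  obtain ⟨d, hd, htd⟩ := hzero.exists_norm_lt_notMem hε
  obtain ⟨c, hc, hcop⟩ := (finite_setOf_not_isCoprime_add_C s htd).exists_norm_lt_notMem hε
  exact ⟨d, c, hd, hc, not_not.mp hcop⟩

end LaurentPolynomial

namespace AddMonoidAlgebra

variable {R M N : Type*}

section Semiring

variable [Semiring R]

theorem exists_mapDomain_eq_of_support_subset_range [Nonempty M] {f : M → N} {x : R[N]}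
    (hx : ↑x.coeff.support ⊆ Set.range f) : ∃ y : R[M], mapDomain f y = x := by
  refine ⟨mapDomain (invFun f) x, ?_⟩
  ext b
  rw [coeff_mapDomain, coeff_mapDomain, ← Finsupp.mapDomain_comp,
    Finsupp.mapDomain_congr (f := f ∘ invFun f) (g := id) fun _ ha => invFun_eq (hx ha),
    Finsupp.mapDomain_id]

theorem support_mapDomain_subset_range (f : M → N) (y : R[M]) :
    ↑(mapDomain f y).coeff.support ⊆ Set.range f := by
  classical
  intro b hb
  obtain ⟨a, -, rfl⟩ := Finset.mem_image.mp (Finsupp.mapDomain_support hb)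
  exact ⟨a, rfl⟩

theorem support_add_single_subset {A : Set N} {x : R[N]} {a : N} (hx : ↑x.coeff.support ⊆ A)
    (ha : a ∈ A) (r : R) : ↑(x + single a r).coeff.support ⊆ A := by
  classical
  intro b hb
  rcases Finset.mem_union.mp (Finsupp.support_add hb) with hb | hb
  · exact hx hb
  · rwa [Finset.mem_singleton.mp (Finsupp.support_single_subset hb)]

end Semiring

theorem norm_coeff_add_single_sub_le [SeminormedRing R] (x : R[N]) (a b : N) (r : R) :
    ‖(x + single a r).coeff b - x.coeff b‖ ≤ ‖r‖ := by
  classical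
  rw [coeff_add, Finsupp.add_apply, add_sub_cancel_left, coeff_single, Finsupp.single_apply]
  split_ifs <;> simp

end AddMonoidAlgebra

open LaurentPolynomial

noncomputable def gridHom (n : ℕ) : ℤ →+ ℝ :=
  AddMonoidHom.mk' (fun ℓ => (ℓ : ℝ) / n) fun a b => by push_cast; exact add_div _ _ _

theorem mem_range_gridHom {n : ℕ} {x : ℝ} : x ∈ Set.range (gridHom n) ↔ ∃ ℓ : ℤ, x = ℓ / n :=
  exists_congr fun _ => eq_comm

theorem dirac_comb_approx_unimodular_general (n : ℕ) (L : ℤ) (hL : 0 ≤ L)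
    (T S : AddMonoidAlgebra ℂ ℝ)
    (hT : ∀ x ∈ T.coeff.support, ∃ ℓ : ℤ, -L ≤ ℓ ∧ ℓ ≤ L ∧ x = (ℓ : ℝ) / n)
    (hS : ∀ x ∈ S.coeff.support, ∃ ℓ : ℤ, -L ≤ ℓ ∧ ℓ ≤ L ∧ x = (ℓ : ℝ) / n)
    {ε : ℝ} (hε : 0 < ε) :
    ∃ T' S' U V : AddMonoidAlgebra ℂ ℝ,
      (∀ x ∈ T'.coeff.support, ∃ ℓ : ℤ, -L ≤ ℓ ∧ ℓ ≤ L ∧ x = (ℓ : ℝ) / n) ∧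
      (∀ x ∈ S'.coeff.support, ∃ ℓ : ℤ, -L ≤ ℓ ∧ ℓ ≤ L ∧ x = (ℓ : ℝ) / n) ∧
      (∀ x : ℝ, ‖T'.coeff x - T.coeff x‖ < ε) ∧
      (∀ x : ℝ, ‖S'.coeff x - S.coeff x‖ < ε) ∧
      (∀ x ∈ U.coeff.support, ∃ ℓ : ℤ, x = (ℓ : ℝ) / n) ∧
      (∀ x ∈ V.coeff.support, ∃ ℓ : ℤ, x = (ℓ : ℝ) / n) ∧
      T' * U + S' * V = 1 := by
  set φ := AddMonoidAlgebra.mapDomainRingHom ℂ (gridHom n)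
  have h0 : ∃ ℓ : ℤ, -L ≤ ℓ ∧ ℓ ≤ L ∧ (0 : ℝ) = ℓ / n := ⟨0, by omega, hL, by simp⟩
  have hgrid {x : ℝ} (hx : ∃ ℓ : ℤ, -L ≤ ℓ ∧ ℓ ≤ L ∧ x = ℓ / n) : x ∈ Set.range (gridHom n) :=
    mem_range_gridHom.mpr (hx.imp fun _ => And.right ∘ And.right)
  obtain ⟨t, rfl⟩ := AddMonoidAlgebra.exists_mapDomain_eq_of_support_subset_range
    fun x hx => hgrid (hT x hx)
  obtain ⟨s, rfl⟩ := AddMonoidAlgebra.exists_mapDomain_eq_of_support_subset_range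
    fun x hx => hgrid (hS x hx)
  obtain ⟨d, c, hd, hc, u, v, huv⟩ := exists_isCoprime_add_C_add_C t s hε
  refine ⟨φ (t + C d), φ (s + C c), φ u, φ v, ?_, ?_, ?_, ?_, ?_, ?_, ?_⟩
  · rw [map_add, mapDomainRingHom_C]
    exact AddMonoidAlgebra.support_add_single_subset hT h0 d
  · rw [map_add, mapDomainRingHom_C]
    exact AddMonoidAlgebra.support_add_single_subset hS h0 c
  · rw [map_add, mapDomainRingHom_C]
    exact fun x => (AddMonoidAlgebra.norm_coeff_add_single_sub_le _ _ _ _).trans_lt hd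
  · rw [map_add, mapDomainRingHom_C]
    exact fun x => (AddMonoidAlgebra.norm_coeff_add_single_sub_le _ _ _ _).trans_lt hc
  · exact fun x hx => mem_range_gridHom.mp (AddMonoidAlgebra.support_mapDomain_subset_range _ _ hx)
  · exact fun x hx => mem_range_gridHom.mp (AddMonoidAlgebra.support_mapDomain_subset_range _ _ hx)
  · have hUV := congrArg φ huv
    rw [map_add, map_mul, map_mul, map_one] at hUV
    linear_combination hUV

/-- A pair of "Dirac delta combs" with spacing `1/n` supported in `{ℓ/n : -L ≤ ℓ ≤ L}`
(modelled as elements of the convolution algebra `AddMonoidAlgebra ℂ ℝ` of finite linear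
combinations of Dirac deltas) can be approximated, arbitrarily well in the coefficients,
by a unimodular pair of such combs. -/
theorem dirac_comb_approx_unimodular (n : ℕ) (hn : 1 ≤ n) (L : ℤ) (hL : 0 ≤ L)
    (T S : AddMonoidAlgebra ℂ ℝ)
    (hT : ∀ x ∈ T.coeff.support, ∃ ℓ : ℤ, -L ≤ ℓ ∧ ℓ ≤ L ∧ x = (ℓ : ℝ) / n)
    (hS : ∀ x ∈ S.coeff.support, ∃ ℓ : ℤ, -L ≤ ℓ ∧ ℓ ≤ L ∧ x = (ℓ : ℝ) / n)
    {ε : ℝ} (hε : 0 < ε) :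
    ∃ T' S' U V : AddMonoidAlgebra ℂ ℝ,
      (∀ x ∈ T'.coeff.support, ∃ ℓ : ℤ, -L ≤ ℓ ∧ ℓ ≤ L ∧ x = (ℓ : ℝ) / n) ∧
      (∀ x ∈ S'.coeff.support, ∃ ℓ : ℤ, -L ≤ ℓ ∧ ℓ ≤ L ∧ x = (ℓ : ℝ) / n) ∧
      (∀ x : ℝ, ‖T'.coeff x - T.coeff x‖ < ε) ∧
      (∀ x : ℝ, ‖S'.coeff x - S.coeff x‖ < ε) ∧
      (∀ x ∈ U.coeff.support, ∃ ℓ : ℤ, x = (ℓ : ℝ) / n) ∧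
      (∀ x ∈ V.coeff.support, ∃ ℓ : ℤ, x = (ℓ : ℝ) / n) ∧
      T' * U + S' * V = 1 :=
  dirac_comb_approx_unimodular_general n L hL T S hT hS hε
end

section
/- If T, S ∈ AddMonoidAlgebra ℂ ℝ satisfy T * S = 1 (convolution product, with 1 the delta at 0), then there exist a ∈ ℝ and a nonzero c ∈ ℂ such that T = single(a, c). In other words, the units of the convolution algebra of finite linear combinations of Dirac deltas on ℝ are exactly the nonzero scalar multiples of single Dirac deltas. -/
/-!
Being linearly ordered, the exponent group `ℝ` has the two-unique-sums property: whenever finite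
sets `A, B` satisfy `1 < |A| |B|`, at least two distinct pairs `(a, b) ∈ A × B` are the only way
to write their sum `a + b`. Applied to the supports of `T` and `S`, the coefficients of `T * S`
at those two sums are products of nonzero coefficients, so `T * S` has at least two monomials.
Since `1` has only one, `T` and `S` are both monomials.
-/

open Finset

namespace AddMonoidAlgebra

variable {R A : Type*} [Semiring R] [NoZeroDivisors R]

theorem one_lt_card_support_coeff_mul [Add A] [TwoUniqueSums A] {f g : R[A]}
    (h : 1 < #f.coeff.support * #g.coeff.support) : 1 < #(f * g).coeff.support := by
  obtain ⟨p, hp, q, hq, hpq, hpu, hqu⟩ := TwoUniqueSums.uniqueAdd_of_one_lt_card h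
  have mem_support {p : A × A} (hp : p ∈ f.coeff.support ×ˢ g.coeff.support)
      (hu : UniqueAdd f.coeff.support g.coeff.support p.1 p.2) :
      p.1 + p.2 ∈ (f * g).coeff.support := by
    rw [mem_product, Finsupp.mem_support_iff, Finsupp.mem_support_iff] at hp
    rw [Finsupp.mem_support_iff, coeff_mul_add_of_uniqueAdd hu]
    exact mul_ne_zero hp.1 hp.2
  obtain ⟨hq₁, hq₂⟩ := mem_product.1 hq
  have hne : p.1 + p.2 ≠ q.1 + q.2 := fun he ↦ hpq (Prod.ext_iff.2 (hpu hq₁ hq₂ he.symm)).symm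
  exact one_lt_card.2 ⟨_, mem_support hp hpu, _, mem_support hq hqu, hne⟩

theorem exists_eq_single_of_mul_eq_one [Nontrivial R] [AddZeroClass A] [TwoUniqueSums A]
    {f g : R[A]} (h : f * g = 1) : ∃ (a : A) (c : R), c ≠ 0 ∧ f = single a c := by
  have hf : f ≠ 0 := by rintro rfl; simp at h
  have hg : g ≠ 0 := by rintro rfl; simp at h
  have hprod : #f.coeff.support * #g.coeff.support ≤ 1 := by
    by_contra! hlt
    simpa [h] using one_lt_card_support_coeff_mul hlt
  have hf1 : #f.coeff.support = 1 := by
    have hf_pos := card_pos.2 (Finsupp.support_nonempty_iff.2 (coeff_eq_zero.not.2 hf))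
    have hg_pos := card_pos.2 (Finsupp.support_nonempty_iff.2 (coeff_eq_zero.not.2 hg))
    nlinarith
  obtain ⟨a, c, hc, hfc⟩ := Finsupp.card_support_eq_one'.1 hf1
  exact ⟨a, c, hc, coeff_injective hfc⟩

end AddMonoidAlgebra

/-- The units of the convolution algebra `AddMonoidAlgebra ℂ ℝ` of finite linear
combinations of Dirac delta distributions on `ℝ` are exactly the nonzero scalar
multiples of single Dirac deltas: if `T * S = 1` then `T = single a c` for some
`a : ℝ` and nonzero `c : ℂ`. -/
theorem addMonoidAlgebra_unit_is_single (T S : AddMonoidAlgebra ℂ ℝ)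
    (h : T * S = 1) :
    ∃ (a : ℝ) (c : ℂ), c ≠ 0 ∧ T = AddMonoidAlgebra.single a c :=
  AddMonoidAlgebra.exists_eq_single_of_mul_eq_one h
end

section
/- There do not exist sequences (c_n) of complex numbers and (a_n) of real numbers such that for every infinitely differentiable function φ : ℝ → ℂ, the sequence c_n · φ(a_n) converges to −φ'(0) as n → ∞. Consequently, the distribution δ_0' cannot be approximated in the weak-* topology σ(𝓔',𝓔) by nonzero multiples of Dirac delta distributions. -/
open Filter

/-- The distribution `δ₀'` cannot be approximated in the weak-* topology by multiples
of Dirac deltas: there are no sequences `(cₙ)` in `ℂ` and `(aₙ)` in `ℝ` such that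
`cₙ · φ(aₙ) → -φ'(0)` for every smooth `φ : ℝ → ℂ`. -/
theorem no_dirac_approx_of_deriv_delta :
    ¬ ∃ (c : ℕ → ℂ) (a : ℕ → ℝ), ∀ φ : ℝ → ℂ, ContDiff ℝ (⊤ : ℕ∞) φ →
      Tendsto (fun n => c n * φ (a n)) atTop (nhds (-deriv φ 0)) := by
  rintro ⟨c, a, h⟩
  -- φ = 1 : cₙ → 0
  have h0 : Tendsto (fun n => c n) atTop (nhds 0) := by
    have := h (fun _ => (1 : ℂ)) contDiff_const
    simpa using this
  -- φ = x : cₙ aₙ → -1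
  have hd1 : HasDerivAt (fun x : ℝ => (x : ℂ)) 1 0 := by
    simpa using (hasDerivAt_id (0 : ℝ)).ofReal_comp
  have h1 : Tendsto (fun n => c n * (a n : ℂ)) atTop (nhds (-1)) := by
    have := h (fun x : ℝ => (x : ℂ)) Complex.ofRealCLM.contDiff
    simpa [hd1.deriv] using this
  -- φ = x² : cₙ aₙ² → 0
  have hd2 : HasDerivAt (fun x : ℝ => (x : ℂ) * (x : ℂ)) 0 0 := by
    simpa using hd1.fun_mul hd1
  have h2 : Tendsto (fun n => c n * ((a n : ℂ) * (a n : ℂ))) atTop (nhds 0) := by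
    have := h (fun x : ℝ => (x : ℂ) * (x : ℂ))
      (Complex.ofRealCLM.contDiff.mul Complex.ofRealCLM.contDiff)
    simpa [hd2.deriv] using this
  -- (cₙ aₙ)² → 1 and (cₙ aₙ)² = cₙ · (cₙ aₙ²) → 0
  have hA : Tendsto (fun n => (c n * (a n : ℂ)) * (c n * (a n : ℂ))) atTop
      (nhds ((-1) * (-1))) := h1.mul h1
  have hB : Tendsto (fun n => (c n * (a n : ℂ)) * (c n * (a n : ℂ))) atTop
      (nhds 0) := by
    have := h0.mul h2
    simpa [mul_assoc, mul_comm, mul_left_comm] using this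
  have : ((-1 : ℂ) * (-1)) = 0 := tendsto_nhds_unique hA hB
  norm_num at this
end
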